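/- The clique number of the configuration graph G(P) equals 1 + max_{i∈Σ} P[i]. -/

import Mathlib

/-- The Parikh vector of a word `w : Fin n → Fin σ`. -/
def parikh {n σ : ℕ} (w : Fin n → Fin σ) : Fin σ → ℕ :=
  fun a => (Finset.univ.filter fun i => w i = a).card

/-- Words of length `n` over alphabet `Fin σ` with Parikh vector `P`. -/
abbrev Words (n σ : ℕ) (P : Fin σ → ℕ) := {w : Fin n → Fin σ // parikh w = P}

/-- `u` is obtained from `w` by a single 2-swap. -/
def isSwap {n σ : ℕ} (w u : Fin n → Fin σ) : Prop :=
  ∃ i j : Fin n, i ≠ j ∧ w i ≠ w j ∧ u = w ∘ Equiv.swap i j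

/-- The configuration graph `G(P)`. -/
def configGraph (n σ : ℕ) (P : Fin σ → ℕ) : SimpleGraph (Words n σ P) :=
  SimpleGraph.fromRel fun w u => isSwap w.1 u.1

/-!
Two words of a clique are equal or one swap apart, so they are at Hamming distance at most two.
Fix a word `w` of a clique; every other member is `w ∘ swap i j` with `w i ≠ w j`, and comparing
two of them shows that they all exchange the same two letters `a ≠ b`. Orienting each swap as
`(i, j)` with `w i = a`, `w j = b`, any two of these pairs agree in a coordinate (otherwise the
two words differ in three positions), so either all have the same first or all the same second
coordinate; hence there are at most `max (P a) (P b)` of them. Conversely, for a most frequent letter `a` and a position `j` with `w j ≠ a`, the word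
`w` together with the words `w ∘ swap i j`, `w i = a`, is a clique of size `1 + P a`.
-/

open Finset

theorem Finset.card_le_max_card_of_forall_fst_eq_or_snd_eq {α β : Type*} [DecidableEq α]
    [DecidableEq β] {A : Finset α} {B : Finset β} {S : Finset (α × β)} (hS : S ⊆ A ×ˢ B)
    (h : ∀ x ∈ S, ∀ y ∈ S, x.1 = y.1 ∨ x.2 = y.2) : #S ≤ max #A #B := by
  by_cases hfst : ∀ x ∈ S, ∀ y ∈ S, x.1 = y.1
  · calc #S = #(S.image Prod.snd) :=
          (card_image_of_injOn fun x hx y hy hxy => Prod.ext (hfst x hx y hy) hxy).symm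
      _ ≤ #B := card_le_card (image_subset_iff.2 fun x hx => (mem_product.1 (hS hx)).2)
      _ ≤ max #A #B := le_max_right _ _
  push Not at hfst
  obtain ⟨x, hx, y, hy, hxy⟩ := hfst
  have hsnd : ∀ z ∈ S, z.2 = x.2 := by
    intro z hz
    by_cases hzx : z.1 = x.1
    · rw [(h z hz y hy).resolve_left (hzx ▸ hxy), (h x hx y hy).resolve_left hxy]
    · exact (h z hz x hx).resolve_left hzx
  calc #S = #(S.image Prod.fst) :=
        (card_image_of_injOn fun z hz z' hz' hzz' =>
          Prod.ext hzz' ((hsnd z hz).trans (hsnd z' hz').symm)).symm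
    _ ≤ #A := card_le_card (image_subset_iff.2 fun x hx => (mem_product.1 (hS hx)).1)
    _ ≤ max #A #B := le_max_left _ _

lemma comp_swap_comp_swap_of_apply_eq {ι α : Type*} [DecidableEq ι] {w : ι → α} {i i' j : ι}
    (hw : w i = w i') :
    w ∘ Equiv.swap i j ∘ Equiv.swap i i' = w ∘ Equiv.swap i' j := by
  ext x
  simp only [Function.comp_apply, Equiv.swap_apply_def]
  grind

section Hamming

variable {ι α : Type*} [Fintype ι] [DecidableEq ι] [DecidableEq α]

lemma hammingDist_comp_swap_le_two (w : ι → α) (i j : ι) :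
    hammingDist w (w ∘ Equiv.swap i j) ≤ 2 := by
  refine (card_le_card fun x hx => ?_).trans (card_insert_le i {j})
  by_contra hxij
  simp only [mem_insert, mem_singleton, not_or] at hxij
  simp [Equiv.swap_apply_of_ne_of_ne hxij.1 hxij.2] at hx

lemma two_lt_hammingDist {u v : ι → α} {x y z : ι} (hxy : x ≠ y) (hxz : x ≠ z) (hyz : y ≠ z)
    (hx : u x ≠ v x) (hy : u y ≠ v y) (hz : u z ≠ v z) : 2 < hammingDist u v := by
  have hsub : {x, y, z} ⊆ ({i | u i ≠ v i} : Finset ι) := by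
    simp [insert_subset_iff, hx, hy, hz]
  calc 2 < #{x, y, z} := by simp [card_insert_of_notMem, hxy, hxz, hyz]
    _ ≤ hammingDist u v := card_le_card hsub

variable {w : ι → α} {i j k l : ι}

lemma eq_or_eq_of_hammingDist_comp_swap_le_two (hik : w i = w k) (hjl : w j = w l)
    (hij : w i ≠ w j) (h : hammingDist (w ∘ Equiv.swap i j) (w ∘ Equiv.swap k l) ≤ 2) :
    i = k ∨ j = l := by
  by_contra! hne
  have hkj : k ≠ j := fun h => hij (by rw [hik, h])
  have hil : i ≠ l := fun h => hij (by rw [hjl, h])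
  refine h.not_gt (two_lt_hammingDist (ne_of_apply_ne w hij) hne.1 hkj.symm ?_ ?_ ?_)
  · simpa [Equiv.swap_apply_of_ne_of_ne hne.1 hil] using hij.symm
  · simpa [Equiv.swap_apply_of_ne_of_ne hkj.symm hne.2] using hij
  · simpa [Equiv.swap_apply_of_ne_of_ne hne.1.symm hkj, ← hik, ← hjl] using hij

lemma apply_eq_of_hammingDist_comp_swap_le_two (hij : w i ≠ w j) (hil : w i ≠ w l)
    (h : hammingDist (w ∘ Equiv.swap i j) (w ∘ Equiv.swap i l) ≤ 2) : w j = w l := by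
  by_contra hjl
  have hjl' : j ≠ l := ne_of_apply_ne w hjl
  refine h.not_gt (two_lt_hammingDist (ne_of_apply_ne w hij) (ne_of_apply_ne w hil) hjl' ?_ ?_ ?_)
  · simpa using hjl
  · simpa [Equiv.swap_apply_of_ne_of_ne (ne_of_apply_ne w hij).symm hjl'] using hij
  · simpa [Equiv.swap_apply_of_ne_of_ne (ne_of_apply_ne w hil).symm hjl'.symm] using hil.symm

lemma sym2_eq_of_hammingDist_comp_swap_le_two (hij : w i ≠ w j) (hkl : w k ≠ w l)
    (h : hammingDist (w ∘ Equiv.swap i j) (w ∘ Equiv.swap k l) ≤ 2) :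
    s(w k, w l) = s(w i, w j) := by
  obtain rfl | hik := eq_or_ne i k
  · rw [apply_eq_of_hammingDist_comp_swap_le_two hij hkl h]
  obtain rfl | hil := eq_or_ne i l
  · rw [Equiv.swap_comm k] at h
    rw [Sym2.eq_swap, apply_eq_of_hammingDist_comp_swap_le_two hij hkl.symm h]
  obtain rfl | hjk := eq_or_ne j k
  · rw [Equiv.swap_comm i] at h
    rw [Sym2.eq_swap (a := w i), apply_eq_of_hammingDist_comp_swap_le_two hij.symm hkl h]
  obtain rfl | hjl := eq_or_ne j l
  · rw [Equiv.swap_comm i, Equiv.swap_comm k] at h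
    rw [apply_eq_of_hammingDist_comp_swap_le_two hij.symm hkl.symm h]
  exfalso
  refine h.not_gt (two_lt_hammingDist (ne_of_apply_ne w hij) hik hjk ?_ ?_ ?_)
  · simpa [Equiv.swap_apply_of_ne_of_ne hik hil] using hij.symm
  · simpa [Equiv.swap_apply_of_ne_of_ne hjk hjl] using hij
  · simpa [Equiv.swap_apply_of_ne_of_ne hik.symm hjk.symm] using hkl

lemma exists_comp_swap_eq_of_hammingDist_le_two {p q : ι} (hpq : w p ≠ w q) (hij : w i ≠ w j)
    (h : hammingDist (w ∘ Equiv.swap p q) (w ∘ Equiv.swap i j) ≤ 2) :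
    ∃ k l, w k = w p ∧ w l = w q ∧ w ∘ Equiv.swap i j = w ∘ Equiv.swap k l := by
  rcases Sym2.eq_iff.1 (sym2_eq_of_hammingDist_comp_swap_le_two hpq hij h) with
    ⟨hi, hj⟩ | ⟨hi, hj⟩
  · exact ⟨i, j, hi, hj, rfl⟩
  · exact ⟨j, i, hj, hi, by rw [Equiv.swap_comm]⟩

end Hamming

lemma isSwap.symm {n σ : ℕ} {w u : Fin n → Fin σ} (h : isSwap w u) : isSwap u w := by
  obtain ⟨i, j, hij, hwij, rfl⟩ := h
  refine ⟨i, j, hij, by simpa using hwij.symm, ?_⟩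
  ext x
  simp

lemma hammingDist_le_two_of_isSwap {n σ : ℕ} {w u : Fin n → Fin σ} (h : isSwap w u) :
    hammingDist w u ≤ 2 := by
  obtain ⟨i, j, -, -, rfl⟩ := h
  exact hammingDist_comp_swap_le_two w i j

lemma parikh_comp_perm {n σ : ℕ} (w : Fin n → Fin σ) (e : Equiv.Perm (Fin n)) :
    parikh (w ∘ e) = parikh w :=
  funext fun _ => card_equiv e (by simp)

lemma exists_parikh_eq {n σ : ℕ} {P : Fin σ → ℕ} (hn : ∑ a, P a = n) :
    ∃ w : Fin n → Fin σ, parikh w = P := by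
  have e : (Σ a : Fin σ, Fin (P a)) ≃ Fin n := Fintype.equivOfCardEq (by simp [hn])
  refine ⟨fun i => (e.symm i).1, funext fun a => ?_⟩
  calc parikh _ a = #{x : Σ b, Fin (P b) | x.1 = a} := card_equiv e.symm (by simp)
    _ = P a := by
      rw [← Fintype.card_subtype, Fintype.card_congr (Equiv.sigmaSubtype a), Fintype.card_fin]

def Words.swap {n σ : ℕ} {P : Fin σ → ℕ} (w : Words n σ P) (i j : Fin n) : Words n σ P :=
  ⟨w.1 ∘ Equiv.swap i j, (parikh_comp_perm _ _).trans w.2⟩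

@[simp]
lemma Words.coe_swap {n σ : ℕ} {P : Fin σ → ℕ} (w : Words n σ P) (i j : Fin n) :
    (w.swap i j).1 = w.1 ∘ Equiv.swap i j :=
  rfl

namespace configGraph

variable {n σ : ℕ} {P : Fin σ → ℕ}

lemma adj_iff {u v : Words n σ P} :
    (configGraph n σ P).Adj u v ↔ u ≠ v ∧ isSwap u.1 v.1 := by
  rw [configGraph, SimpleGraph.fromRel_adj]
  exact and_congr_right fun _ => or_iff_left_of_imp isSwap.symm

lemma isSwap_of_isClique {K : Set (Words n σ P)} (hK : (configGraph n σ P).IsClique K)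
    {u v : Words n σ P} (hu : u ∈ K) (hv : v ∈ K) (huv : u ≠ v) : isSwap u.1 v.1 :=
  (adj_iff.1 (hK hu hv huv)).2

lemma hammingDist_le_two_of_isClique {K : Set (Words n σ P)}
    (hK : (configGraph n σ P).IsClique K) {u v : Words n σ P} (hu : u ∈ K) (hv : v ∈ K) :
    hammingDist u.1 v.1 ≤ 2 := by
  obtain rfl | huv := eq_or_ne u v
  · simp
  exact hammingDist_le_two_of_isSwap (isSwap_of_isClique hK hu hv huv)

lemma card_erase_le_of_isClique {K : Finset (Words n σ P)}
    (hK : (configGraph n σ P).IsClique (K : Set (Words n σ P))) {w u₀ : Words n σ P}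
    (hw : w ∈ K) (hu₀ : u₀ ∈ K) {p q : Fin n} (hpq : w.1 p ≠ w.1 q)
    (hu₀w : u₀.1 = w.1 ∘ Equiv.swap p q) :
    #(K.erase w) ≤ max (P (w.1 p)) (P (w.1 q)) := by
  have hmem {u} (hu : u ∈ K.erase w) : u ∈ (K : Set (Words n σ P)) := mem_of_mem_erase hu
  set A := univ.filter (w.1 · = w.1 p)
  set B := univ.filter (w.1 · = w.1 q)
  have hrep : ∀ u ∈ K.erase w, ∃ x ∈ A ×ˢ B, u.1 = w.1 ∘ Equiv.swap x.1 x.2 := by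
    intro u hu
    obtain ⟨i, j, -, hij, hu'⟩ := isSwap_of_isClique hK hw (hmem hu) (ne_of_mem_erase hu).symm
    have hdist := hammingDist_le_two_of_isClique hK hu₀ (hmem hu)
    rw [hu₀w, hu'] at hdist
    obtain ⟨k, l, hk, hl, hkl⟩ := exists_comp_swap_eq_of_hammingDist_le_two hpq hij hdist
    exact ⟨(k, l), by simp [A, B, hk, hl], hu'.trans hkl⟩
  have : Nonempty (Fin n) := ⟨p⟩
  choose! f hfAB hf using hrep
  have hshare :
      ∀ x ∈ (K.erase w).image f, ∀ y ∈ (K.erase w).image f, x.1 = y.1 ∨ x.2 = y.2 := by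
    simp only [forall_mem_image]
    intro u hu v hv
    have hu' := hfAB u hu
    have hv' := hfAB v hv
    simp only [A, B, mem_product, mem_filter, mem_univ, true_and] at hu' hv'
    apply eq_or_eq_of_hammingDist_comp_swap_le_two (hu'.1.trans hv'.1.symm)
      (hu'.2.trans hv'.2.symm) (by rw [hu'.1, hu'.2]; exact hpq)
    rw [← hf u hu, ← hf v hv]
    exact hammingDist_le_two_of_isClique hK (hmem hu) (hmem hv)
  have hf_inj : Set.InjOn f (K.erase w) := fun u hu v hv h =>
    Subtype.ext ((hf u hu).trans (h ▸ (hf v hv).symm))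
  calc #(K.erase w) = #((K.erase w).image f) := (card_image_of_injOn hf_inj).symm
    _ ≤ max #A #B :=
        card_le_max_card_of_forall_fst_eq_or_snd_eq (image_subset_iff.2 hfAB) hshare
    _ = max (P (w.1 p)) (P (w.1 q)) := by
        rw [← congrFun w.2 (w.1 p), ← congrFun w.2 (w.1 q)]
        rfl

lemma card_le_of_isClique {K : Finset (Words n σ P)}
    (hK : (configGraph n σ P).IsClique (K : Set (Words n σ P))) : #K ≤ 1 + univ.sup P := by
  obtain rfl | ⟨w, hw⟩ := K.eq_empty_or_nonempty
  · simp
  rw [← card_erase_add_one hw, add_comm]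
  obtain hK' | ⟨u₀, hu₀⟩ := (K.erase w).eq_empty_or_nonempty
  · simp [hK']
  obtain ⟨p, q, -, hpq, hu₀w⟩ :=
    isSwap_of_isClique hK hw (mem_of_mem_erase hu₀) (ne_of_mem_erase hu₀).symm
  grw [card_erase_le_of_isClique hK hw (mem_of_mem_erase hu₀) hpq hu₀w]
  gcongr
  exact max_le (le_sup (mem_univ _)) (le_sup (mem_univ _))

lemma isNClique_insert_image_swap (w : Words n σ P) {a : Fin σ} {j : Fin n} (hj : w.1 j ≠ a) :
    (configGraph n σ P).IsNClique (1 + P a)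
      (insert w ((univ.filter (w.1 · = a)).image (w.swap · j))) := by
  set A := univ.filter (w.1 · = a)
  have hA {i} (hi : i ∈ A) : w.1 i = a := (mem_filter.1 hi).2
  have hAj {i} (hi : i ∈ A) : i ≠ j := fun h => hj (h ▸ hA hi)
  have hswap_self (i) : (w.swap i j).1 i = w.1 j := by simp
  have hswap_of_ne {i i'} (hi' : i' ∈ A) (hne : i' ≠ i) : (w.swap i j).1 i' = a := by
    simp [Equiv.swap_apply_of_ne_of_ne hne (hAj hi'), hA hi']
  have hnotmem : w ∉ A.image (w.swap · j) := by
    simp only [mem_image, not_exists, not_and]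
    intro i hi h
    exact hj ((hswap_self i).symm.trans ((congrArg (·.1 i) h).trans (hA hi)))
  have hinj : Set.InjOn (w.swap · j) A := by
    intro i hi i' hi' h
    by_contra hne
    exact hj ((hswap_self i).symm.trans ((congrArg (·.1 i) h).trans (hswap_of_ne hi hne)))
  have hadj_self {i} (hi : i ∈ A) : (configGraph n σ P).Adj w (w.swap i j) :=
    adj_iff.2 ⟨fun h => hnotmem (mem_image.2 ⟨i, hi, h.symm⟩), i, j, hAj hi,
      by rw [hA hi]; exact hj.symm, rfl⟩
  have hadj {i i'} (hi : i ∈ A) (hi' : i' ∈ A) (hne : i ≠ i') :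
      (configGraph n σ P).Adj (w.swap i j) (w.swap i' j) :=
    adj_iff.2 ⟨fun h => hne (hinj hi hi' h), i, i', hne,
      by rw [hswap_self, hswap_of_ne hi' (Ne.symm hne)]; exact hj,
      (comp_swap_comp_swap_of_apply_eq ((hA hi).trans (hA hi').symm)).symm⟩
  refine ⟨?_, ?_⟩
  · rw [coe_insert, SimpleGraph.isClique_insert]
    refine ⟨?_, ?_⟩
    · simp only [coe_image, Set.Pairwise, Set.mem_image, mem_coe]
      rintro _ ⟨i, hi, rfl⟩ _ ⟨i', hi', rfl⟩ hne
      exact hadj hi hi' fun h => hne (h ▸ rfl)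
    · simp only [coe_image, Set.mem_image, mem_coe]
      rintro _ ⟨i, hi, rfl⟩ -
      exact hadj_self hi
  · rw [card_insert_of_notMem hnotmem, card_image_of_injOn hinj, add_comm]
    exact congrArg (1 + ·) (congrFun w.2 a)

end configGraph

theorem stmt7 (n σ : ℕ) (hσ : 2 ≤ σ) (P : Fin σ → ℕ) (hP : ∀ i, 1 ≤ P i)
    (hn : ∑ i, P i = n) :
    (configGraph n σ P).cliqueNum = 1 + Finset.univ.sup P := by
  refine le_antisymm ?_ ?_
  · obtain ⟨K, hK⟩ := (configGraph n σ P).exists_isNClique_cliqueNum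
    exact hK.card_eq ▸ configGraph.card_le_of_isClique hK.isClique
  · have : Nontrivial (Fin σ) := Fin.nontrivial_iff_two_le.2 hσ
    obtain ⟨w, hw⟩ := exists_parikh_eq hn
    obtain ⟨a, -, ha⟩ := exists_mem_eq_sup univ univ_nonempty P
    obtain ⟨b, hba⟩ := exists_ne a
    obtain ⟨j, hj⟩ : ∃ j, w j = b := by
      obtain ⟨j, hj⟩ := card_pos.1 ((hP b).trans_eq (congrFun hw b).symm)
      exact ⟨j, (mem_filter.1 hj).2⟩
    have hN := configGraph.isNClique_insert_image_swap ⟨w, hw⟩ (hj ▸ hba)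
    rw [ha, ← hN.card_eq]
    exact SimpleGraph.IsClique.card_le_cliqueNum (tc := hN.isClique)
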